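/- Let s(η, ζ) = (2/π^2) * ∫_{0}^{2π} sqrt(1 - (sqrt(1-η^2) * sqrt(1-ζ^2) * sin γ - η ζ)^2) dγ. Then for every ζ ∈ [-1, 1], ∫_{-1}^{1} s(η, ζ) dη = 2; that is, the total insolation over the planet is normalized to 2 independently of the obliquity. -/

import Mathlib

/-- The mean annual insolation distribution function, where `η` is the sine of the
latitude and `ζ` is the cosine of the obliquity. -/
noncomputable def s (η ζ : ℝ) : ℝ :=
  (2 / Real.pi ^ 2) * ∫ γ in (0:ℝ)..(2 * Real.pi),
    Real.sqrt (1 - (Real.sqrt (1 - η ^ 2) * Real.sqrt (1 - ζ ^ 2) * Real.sin γ - η * ζ) ^ 2)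

open MeasureTheory Real Set

/-!
With `g t = √(1 - t²)` and `n = (0, √(1 - ζ²), -ζ)`, the integral of `s η ζ` is `2 / π²` times
`∫_{S²} g ⟪n, u⟫ dσ(u)` written in height and longitude coordinates (Archimedes: `dσ = dη dγ`).
This sphere integral does not depend on the unit vector `n`, and for the pole it is
`2π ∫_{-1}^{1} g = π²`. Rotation invariance is taken from Lebesgue measure on `ℝ³`: in spherical
coordinates `∫_{ℝ³} g ⟪n, x / ‖x‖⟫ e^{-‖x‖²} dx` is `∫_0^∞ R² e^{-R²} dR` times the sphere
integral, and a rotation of the plane spanned by `n` and the pole does not change it.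
-/

lemma cos_pos_iff_mem_Ioo {θ : ℝ} (hθ : θ ∈ Ioo (-π) π) :
    0 < cos θ ↔ θ ∈ Ioo (-(π / 2)) (π / 2) := by
  refine ⟨fun hcos => ⟨?_, ?_⟩, cos_pos_of_mem_Ioo⟩
  · by_contra! h
    have := cos_nonpos_of_pi_div_two_le_of_le (x := -θ) (by linarith) (by linarith [hθ.1])
    rw [cos_neg] at this
    linarith
  · by_contra! h
    linarith [cos_nonpos_of_pi_div_two_le_of_le h (by linarith [hθ.2])]

lemma integral_cos_mul_comp_sin {E : Type*} [NormedAddCommGroup E] [NormedSpace ℝ E] (G : ℝ → E) :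
    ∫ φ in Ioo (-(π / 2)) (π / 2), cos φ • G (sin φ) = ∫ η in -1..1, G η := by
  have h := integral_image_eq_integral_abs_deriv_smul measurableSet_Icc
    (fun φ _ => (hasDerivAt_sin φ).hasDerivWithinAt) injOn_sin G
  rw [bijOn_sin.image_eq] at h
  rw [intervalIntegral.integral_of_le (by norm_num), ← integral_Icc_eq_integral_Ioc, h,
    integral_Icc_eq_integral_Ioo]
  refine setIntegral_congr_fun measurableSet_Ioo fun φ hφ => ?_
  rw [abs_of_pos (cos_pos_of_mem_Ioo hφ)]

lemma Function.Periodic.intervalIntegral_zero_two_pi_eq_setIntegral {E : Type*}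
    [NormedAddCommGroup E] [NormedSpace ℝ E] {f : ℝ → E} (hf : Function.Periodic f (2 * π)) :
    ∫ x in 0..2 * π, f x = ∫ x in Ioo (-π) π, f x := by
  have h := hf.intervalIntegral_add_eq 0 (-π)
  rw [zero_add, show -π + 2 * π = π by ring] at h
  rw [h, intervalIntegral.integral_of_le (by linarith [pi_pos]), integral_Ioc_eq_integral_Ioo]

lemma setIntegral_Ioi_prod_univ_eq_polarCoord {E : Type*} [NormedAddCommGroup E] [NormedSpace ℝ E]
    (f : ℝ × ℝ → E) :
    ∫ q in Ioi 0 ×ˢ univ, f q =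
      ∫ p in Ioi 0 ×ˢ Ioo (-(π / 2)) (π / 2), p.1 • f (polarCoord.symm p) := by
  have hS : MeasurableSet (Ioi (0 : ℝ) ×ˢ (univ : Set ℝ)) := measurableSet_Ioi.prod .univ
  have hT : Ioi 0 ×ˢ Ioo (-(π / 2)) (π / 2) ⊆ polarCoord.target :=
    prod_mono_right (Ioo_subset_Ioo (by linarith [pi_pos]) (by linarith [pi_pos]))
  rw [← integral_indicator hS, ← integral_comp_polarCoord_symm, ← inter_eq_self_of_subset_right hT,
    ← setIntegral_indicator (measurableSet_Ioi.prod measurableSet_Ioo)]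
  refine setIntegral_congr_fun polarCoord.open_target.measurableSet fun p hp => ?_
  have hmem : polarCoord.symm p ∈ Ioi 0 ×ˢ univ ↔ p ∈ Ioi 0 ×ˢ Ioo (-(π / 2)) (π / 2) := by
    have hr : 0 < p.1 := hp.1
    simp [polarCoord_symm_apply, mul_pos_iff_of_pos_left hr, ← cos_pos_iff_mem_Ioo hp.2, hr]
  by_cases h : p ∈ Ioi 0 ×ˢ Ioo (-(π / 2)) (π / 2)
  · rw [indicator_of_mem (hmem.2 h), indicator_of_mem h]
  · rw [indicator_of_notMem (mt hmem.1 h), indicator_of_notMem h, smul_zero]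

noncomputable def rotationProd (δ : ℝ) : ℝ × ℝ ≃ᵐ ℝ × ℝ :=
  Complex.measurableEquivRealProd.symm.trans <|
    (rotation (Circle.exp δ)).toMeasurableEquiv.trans Complex.measurableEquivRealProd

lemma rotationProd_apply (δ : ℝ) (p : ℝ × ℝ) :
    rotationProd δ p = (cos δ * p.1 - sin δ * p.2, sin δ * p.1 + cos δ * p.2) := by
  simp [rotationProd, Complex.exp_ofReal_mul_I_re, Complex.exp_ofReal_mul_I_im, add_comm]

lemma measurePreserving_rotationProd (δ : ℝ) : MeasurePreserving (rotationProd δ) :=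
  Complex.volume_preserving_equiv_real_prod.comp <|
    (LinearIsometryEquiv.measurePreserving (rotation _)).comp
      (Complex.volume_preserving_equiv_real_prod.symm _)

lemma integrable_exp_neg_sq : Integrable fun x : ℝ => exp (-x ^ 2) := by
  simpa using integrable_exp_neg_mul_sq one_pos

lemma integrable_abs_mul_exp_neg_sq : Integrable fun x : ℝ => |x| * exp (-x ^ 2) := by
  simpa [abs_mul] using (integrable_mul_exp_neg_mul_sq one_pos).abs

lemma exp_neg_add_sq (x y : ℝ) : exp (-(x ^ 2 + y ^ 2)) = exp (-x ^ 2) * exp (-y ^ 2) := by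
  rw [neg_add, exp_add]

lemma integral_Ioi_sq_mul_exp_neg_sq_pos : 0 < ∫ R in Ioi 0, R ^ 2 * exp (-R ^ 2) := by
  have h := integral_rpow_mul_exp_neg_rpow (p := 2) (q := 2) two_pos (by norm_num)
  simp only [rpow_two] at h
  rw [h]
  exact mul_pos (by norm_num) (Gamma_pos_of_pos (by norm_num))

lemma integral_Ioi_mul_exp_comp_direction {B : ℝ × ℝ → ℝ} (hB : Measurable B) {C : ℝ}
    (hBC : ∀ q, |B q| ≤ C) :
    ∫ z, ∫ r in Ioi 0, r * exp (-(r ^ 2 + z ^ 2)) * B (r / √(r ^ 2 + z ^ 2), z / √(r ^ 2 + z ^ 2))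
      = (∫ R in Ioi 0, R ^ 2 * exp (-R ^ 2)) * ∫ η in -1..1, B (√(1 - η ^ 2), η) := by
  set K : ℝ × ℝ → ℝ := fun q =>
    q.1 * exp (-(q.1 ^ 2 + q.2 ^ 2)) * B (q.1 / √(q.1 ^ 2 + q.2 ^ 2), q.2 / √(q.1 ^ 2 + q.2 ^ 2))
  have hK : Integrable K ((volume.restrict (Ioi 0)).prod volume) := by
    refine ((integrable_abs_mul_exp_neg_sq.const_mul C).restrict.mul_prod
      integrable_exp_neg_sq).mono' (by fun_prop) (.of_forall fun q => ?_)
    rw [norm_eq_abs, abs_mul, abs_mul, abs_of_pos (exp_pos _), exp_neg_add_sq]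
    calc _ = |q.1| * exp (-q.1 ^ 2) * exp (-q.2 ^ 2) * |B _| := by ring
      _ ≤ |q.1| * exp (-q.1 ^ 2) * exp (-q.2 ^ 2) * C := by gcongr; exact hBC _
      _ = _ := by ring
  calc _ = ∫ q in Ioi 0 ×ˢ univ, K q := by
        rw [Measure.volume_eq_prod, ← Measure.prod_restrict, Measure.restrict_univ,
          integral_prod_symm _ hK]
    _ = ∫ p in Ioi 0 ×ˢ Ioo (-(π / 2)) (π / 2),
          p.1 ^ 2 * exp (-p.1 ^ 2) * (cos p.2 * B (√(1 - sin p.2 ^ 2), sin p.2)) := by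
        rw [setIntegral_Ioi_prod_univ_eq_polarCoord]
        refine setIntegral_congr_fun (measurableSet_Ioi.prod measurableSet_Ioo) ?_
        rintro ⟨R, φ⟩ ⟨hR, hφ⟩
        have hsum : (R * cos φ) ^ 2 + (R * sin φ) ^ 2 = R ^ 2 := by
          rw [mul_pow, mul_pow, ← mul_add, cos_sq_add_sin_sq, mul_one]
        simp only [K, polarCoord_symm_apply, smul_eq_mul]
        rw [hsum, sqrt_sq (le_of_lt hR), mul_div_cancel_left₀ _ (ne_of_gt hR),
          mul_div_cancel_left₀ _ (ne_of_gt hR), ← cos_eq_sqrt_one_sub_sin_sq hφ.1.le hφ.2.le]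
        ring
    _ = _ := by
        rw [← integral_cos_mul_comp_sin, Measure.volume_eq_prod]
        exact setIntegral_prod_mul (fun R => R ^ 2 * exp (-R ^ 2))
          (fun φ => cos φ * B (√(1 - sin φ ^ 2), sin φ)) _ _

noncomputable def latitudeIntegral (g : ℝ → ℝ) (a b : ℝ) (q : ℝ × ℝ) : ℝ :=
  ∫ θ in Ioo (-π) π, g (q.1 * a * sin θ - q.2 * b)

/-- `∫_{S²} g ⟪n, u⟫ dσ(u)` for `n = (0, a, -b)`, in the coordinates
`u = (√(1 - η²) cos θ, √(1 - η²) sin θ, η)`, for which `dσ = dη dθ`. -/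
noncomputable def sphereIntegral (g : ℝ → ℝ) (a b : ℝ) : ℝ :=
  ∫ η in -1..1, latitudeIntegral g a b (√(1 - η ^ 2), η)

/-- `g ⟪n, x / ‖x‖⟫ e^{-‖x‖²}` for `n = (0, a, -b)`. -/
noncomputable def directionalGaussian (g : ℝ → ℝ) (a b : ℝ) (x : (ℝ × ℝ) × ℝ) : ℝ :=
  g ((a * x.1.2 - b * x.2) / √(x.1.1 ^ 2 + x.1.2 ^ 2 + x.2 ^ 2)) *
    exp (-(x.1.1 ^ 2 + x.1.2 ^ 2 + x.2 ^ 2))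

section

variable {g : ℝ → ℝ}

lemma measurable_latitudeIntegral (hg : Measurable g) (a b : ℝ) :
    Measurable (latitudeIntegral g a b) :=
  (StronglyMeasurable.integral_prod_right (f := fun (q : ℝ × ℝ) θ => g (q.1 * a * sin θ - q.2 * b))
    (ν := volume.restrict (Ioo (-π) π))
    (by fun_prop : Measurable _).stronglyMeasurable).measurable

lemma abs_latitudeIntegral_le {C : ℝ} (hC : ∀ t, |g t| ≤ C) (a b : ℝ) (q : ℝ × ℝ) :
    |latitudeIntegral g a b q| ≤ C * (2 * π) := by
  have h := norm_setIntegral_le_of_norm_le_const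
    (measure_Ioo_lt_top (μ := volume) (a := -π) (b := π))
    (f := fun θ => g (q.1 * a * sin θ - q.2 * b)) fun θ _ => hC _
  rwa [volume_real_Ioo, sub_neg_eq_add, ← two_mul, max_eq_left (by positivity)] at h

variable (g) in
lemma sphereIntegral_zero_one : sphereIntegral g 0 1 = 2 * π * ∫ η in -1..1, g (-η) := by
  simp [sphereIntegral, latitudeIntegral, volume_real_Ioo, ← two_mul, pi_pos.le]

lemma integrable_directionalGaussian (hg : Measurable g) {C : ℝ} (hC : ∀ t, |g t| ≤ C) (a b : ℝ) :
    Integrable (directionalGaussian g a b) := by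
  refine (((integrable_exp_neg_sq.mul_prod integrable_exp_neg_sq).const_mul C).mul_prod
    integrable_exp_neg_sq).mono' (by unfold directionalGaussian; fun_prop) (.of_forall fun x => ?_)
  rw [directionalGaussian, norm_eq_abs, abs_mul, abs_of_pos (exp_pos _), neg_add, exp_add,
    exp_neg_add_sq]
  calc _ ≤ C * (exp (-x.1.1 ^ 2) * exp (-x.1.2 ^ 2) * exp (-x.2 ^ 2)) := by gcongr; exact hC _
    _ = _ := by ring

lemma integral_directionalGaussian_eq_integral_Ioi (hg : Measurable g) {C : ℝ}
    (hC : ∀ t, |g t| ≤ C) (a b z : ℝ) :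
    ∫ p, directionalGaussian g a b (p, z) =
      ∫ r in Ioi 0, r * exp (-(r ^ 2 + z ^ 2)) *
        latitudeIntegral g a b (r / √(r ^ 2 + z ^ 2), z / √(r ^ 2 + z ^ 2)) := by
  have hsum (r θ : ℝ) : (r * cos θ) ^ 2 + (r * sin θ) ^ 2 + z ^ 2 = r ^ 2 + z ^ 2 := by
    rw [mul_pow, mul_pow, ← mul_add, cos_sq_add_sin_sq, mul_one]
  have hint : Integrable (fun p : ℝ × ℝ => p.1 • directionalGaussian g a b (polarCoord.symm p, z))
      ((volume.restrict (Ioi 0)).prod (volume.restrict (Ioo (-π) π))) := by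
    refine ((integrable_abs_mul_exp_neg_sq.const_mul C).restrict.mul_prod
      (integrable_const (1 : ℝ))).mono'
      (Measurable.aestronglyMeasurable (by unfold directionalGaussian; fun_prop))
      (.of_forall fun p => ?_)
    rw [directionalGaussian, polarCoord_symm_apply, hsum, norm_eq_abs, smul_eq_mul, abs_mul,
      abs_mul, abs_of_pos (exp_pos _), exp_neg_add_sq, mul_one]
    calc _ ≤ |p.1| * (C * (exp (-p.1 ^ 2) * 1)) := by
          gcongr
          · exact (abs_nonneg _).trans (hC 0)
          · exact hC _
          · exact exp_le_one_iff.2 (neg_nonpos.2 (sq_nonneg z))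
      _ = _ := by ring
  rw [← integral_comp_polarCoord_symm, polarCoord_target, Measure.volume_eq_prod,
    setIntegral_prod _ (by rwa [IntegrableOn, ← Measure.prod_restrict])]
  refine setIntegral_congr_fun measurableSet_Ioi fun r _ => ?_
  rw [latitudeIntegral, ← integral_const_mul]
  refine setIntegral_congr_fun measurableSet_Ioo fun θ _ => ?_
  rw [directionalGaussian, polarCoord_symm_apply, hsum, smul_eq_mul]
  ring_nf

lemma integral_directionalGaussian (hg : Measurable g) {C : ℝ} (hC : ∀ t, |g t| ≤ C) (a b : ℝ) :
    ∫ x, directionalGaussian g a b x =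
      (∫ R in Ioi 0, R ^ 2 * exp (-R ^ 2)) * sphereIntegral g a b := by
  rw [Measure.volume_eq_prod, integral_prod_symm _ (integrable_directionalGaussian hg hC a b)]
  simp_rw [integral_directionalGaussian_eq_integral_Ioi hg hC]
  exact integral_Ioi_mul_exp_comp_direction (measurable_latitudeIntegral hg a b)
    (abs_latitudeIntegral_le hC a b)

variable (g) in
lemma integral_directionalGaussian_cos_sin (δ : ℝ) :
    ∫ x, directionalGaussian g (cos δ) (sin δ) x = ∫ x, directionalGaussian g 1 0 x := by
  let T : (ℝ × ℝ) × ℝ ≃ᵐ (ℝ × ℝ) × ℝ := MeasurableEquiv.prodAssoc.trans <|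
    ((MeasurableEquiv.refl ℝ).prodCongr (rotationProd δ)).trans MeasurableEquiv.prodAssoc.symm
  have hT : MeasurePreserving T := volume_preserving_prodAssoc.symm.comp <|
    ((MeasurePreserving.id volume).prod (measurePreserving_rotationProd δ)).comp
      volume_preserving_prodAssoc
  rw [← hT.integral_comp' (directionalGaussian g 1 0)]
  congr 1
  ext ⟨⟨x, y⟩, z⟩
  have hsq : (cos δ * y - sin δ * z) ^ 2 + (sin δ * y + cos δ * z) ^ 2 = y ^ 2 + z ^ 2 := by
    linear_combination (y ^ 2 + z ^ 2) * cos_sq_add_sin_sq δ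
  have hT_apply : T ((x, y), z) = ((x, (rotationProd δ (y, z)).1), (rotationProd δ (y, z)).2) := rfl
  rw [hT_apply, rotationProd_apply]
  simp only [directionalGaussian, one_mul, zero_mul, sub_zero, add_assoc, hsq]

lemma sphereIntegral_cos_sin (hg : Measurable g) {C : ℝ} (hC : ∀ t, |g t| ≤ C) (δ : ℝ) :
    sphereIntegral g (cos δ) (sin δ) = sphereIntegral g 1 0 := by
  have h := integral_directionalGaussian_cos_sin g δ
  rw [integral_directionalGaussian hg hC, integral_directionalGaussian hg hC] at h
  exact mul_left_cancel₀ integral_Ioi_sq_mul_exp_neg_sq_pos.ne' h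

end

theorem stmt_11 (ζ : ℝ) (hζ : ζ ∈ Set.Icc (-1:ℝ) 1) :
    ∫ η in (-1:ℝ)..1, s η ζ = 2 := by
  set g : ℝ → ℝ := fun t => √(1 - t ^ 2) with hg_def
  have hg : Measurable g := by fun_prop
  have hgC (t : ℝ) : |g t| ≤ 1 := by
    rw [abs_of_nonneg (sqrt_nonneg _), sqrt_le_one]
    nlinarith [sq_nonneg t]
  have hs (η : ℝ) : s η ζ = 2 / π ^ 2 * latitudeIntegral g (√(1 - ζ ^ 2)) ζ (√(1 - η ^ 2), η) := by
    rw [s, Function.Periodic.intervalIntegral_zero_two_pi_eq_setIntegral fun γ => by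
      simp [sin_add_two_pi]]
    rfl
  have hsphere : sphereIntegral g (√(1 - ζ ^ 2)) ζ = π ^ 2 := by
    calc _ = sphereIntegral g (cos (arcsin ζ)) (sin (arcsin ζ)) := by
          rw [cos_arcsin, sin_arcsin hζ.1 hζ.2]
      _ = sphereIntegral g (cos (π / 2)) (sin (π / 2)) := by
          rw [sphereIntegral_cos_sin hg hgC, sphereIntegral_cos_sin hg hgC]
      _ = π ^ 2 := by
          rw [cos_pi_div_two, sin_pi_div_two, sphereIntegral_zero_one]
          simp [hg_def, integral_sqrt_one_sub_sq]
          ring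
  rw [intervalIntegral.integral_congr fun η _ => hs η, intervalIntegral.integral_const_mul]
  rw [← sphereIntegral, hsphere]
  field_simp
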